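/- Let 0 < k < n and let I, J ∈ V_{k,n}, viewed as k-element subsets of [n]. Let S = (I ∪ J) \ (I ∩ J) be their symmetric difference, let m = |I \ J| (so |S| = 2m), and let σ : S → {1,…,2m} be the unique order-preserving bijection. Then I and J are noncrossing in V_{k,n} if and only if the images σ(I \ J) and σ(J \ I), viewed as elements of V_{m,2m}, are noncrossing in V_{m,2m}. That is, whether I and J are noncrossing depends only on their restriction to the symmetric difference I △ J. -/
import Mathlib


/-- Two arcs `(i < i')` and `(j < j')` cross if `i < j < i' < j'` or `j < i < j' < i'`. -/
def Cross (i i' j j' : ℕ) : Prop :=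
  (i < j ∧ j < i' ∧ i' < j') ∨ (j < i ∧ i < j' ∧ j' < i')

/-- Two arcs `(i < i')` and `(j < j')` nest if `i < j < j' < i'` or `j < i < i' < j'`. -/
def Nest (i i' j j' : ℕ) : Prop :=
  (i < j ∧ j < j' ∧ j' < i') ∨ (j < i ∧ i < i' ∧ i' < j')

/-- `I : Fin k → ℕ` represents an element of `V_{k,n}`: a strictly increasing
`k`-tuple with entries in `[n] = {1, …, n}`. -/
def IsVkn (n : ℕ) {k : ℕ} (I : Fin k → ℕ) : Prop :=
  StrictMono I ∧ ∀ a, 1 ≤ I a ∧ I a ≤ n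

/-- `I, J ∈ V_{k,n}` are noncrossing if for all indices `a < b` such that
`I l = J l` for all `a < l < b`, the arcs `(I a < I b)` and `(J a < J b)` do not cross. -/
def NonCrossing {k : ℕ} (I J : Fin k → ℕ) : Prop :=
  ∀ a b : Fin k, a < b → (∀ l : Fin k, a < l → l < b → I l = J l) →
    ¬ Cross (I a) (I b) (J a) (J b)

/-- `I, J ∈ V_{k,n}` are nonnesting if for all indices `a < b`
the arcs `(I a < I b)` and `(J a < J b)` do not nest. -/
def NonNesting {k : ℕ} (I J : Fin k → ℕ) : Prop :=
  ∀ a b : Fin k, a < b → ¬ Nest (I a) (I b) (J a) (J b)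

/-- `x` is an entry of the tuple `I` (i.e. `x` belongs to `I` viewed as a subset of `[n]`). -/
def MemT {k : ℕ} (I : Fin k → ℕ) (x : ℕ) : Prop := ∃ a, I a = x


namespace NCAux

variable {k : ℕ}

def cnt (I : Fin k → ℕ) (v : ℕ) : ℕ := (Finset.univ.filter fun a => I a ≤ v).card
def Av (I : Fin k → ℕ) : Finset ℕ := Finset.univ.image I
def Xs (I J : Fin k → ℕ) : Finset ℕ := Av I \ Av J
def fd (I J : Fin k → ℕ) (v : ℕ) : ℤ := (cnt I v : ℤ) - (cnt J v : ℤ)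
def P (I J : Fin k → ℕ) : Prop :=
  ∃ x ∈ Xs I J, ∃ x' ∈ Xs I J, x < x' ∧ (∀ z ∈ Xs I J, ¬(x < z ∧ z < x')) ∧
    1 ≤ fd I J x ∧ fd I J x' = 1

open Finset

variable {I J : Fin k → ℕ}

lemma mem_Av {I : Fin k → ℕ} {x : ℕ} : x ∈ Av I ↔ ∃ a, I a = x := by
  simp [Av]

lemma cnt_apply (hI : StrictMono I) (a : Fin k) : cnt I (I a) = a.val + 1 := by
  have h : (univ.filter fun l => I l ≤ I a) = Finset.Iic a := by
    ext l; simp [hI.le_iff_le]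
  rw [cnt, h, Fin.card_Iic]

lemma le_of_cnt (hI : StrictMono I) {a : Fin k} {v : ℕ} (h : a.val < cnt I v) : I a ≤ v := by
  by_contra hv
  push_neg at hv
  have hsub : (univ.filter fun l => I l ≤ v) ⊆ Finset.Iio a := by
    intro l hl
    simp only [mem_filter, mem_univ, true_and] at hl
    have : I l < I a := lt_of_le_of_lt hl hv
    simpa using hI.lt_iff_lt.mp this
  have := card_le_card hsub
  rw [Fin.card_Iio] at this
  rw [cnt] at h
  omega

lemma cnt_ge (hI : StrictMono I) {a : Fin k} {v : ℕ} (h : I a ≤ v) : a.val < cnt I v := by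
  have hsub : Finset.Iic a ⊆ (univ.filter fun l => I l ≤ v) := by
    intro l hl
    simp only [Finset.mem_Iic] at hl
    simp only [mem_filter, mem_univ, true_and]
    exact le_trans (hI.monotone hl) h
  have := card_le_card hsub
  rw [Fin.card_Iic] at this
  rw [cnt]
  omega

lemma cnt_eq_card (hI : StrictMono I) (v : ℕ) : cnt I v = (Av I ∩ Finset.Iic v).card := by
  have h : Av I ∩ Finset.Iic v = (univ.filter fun a => I a ≤ v).image I := by
    ext z
    simp only [mem_inter, mem_Av, Finset.mem_Iic, mem_image, mem_filter, mem_univ, true_and]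
    constructor
    · rintro ⟨⟨a, rfl⟩, hz⟩; exact ⟨a, hz, rfl⟩
    · rintro ⟨a, h1, rfl⟩; exact ⟨⟨a, rfl⟩, h1⟩
  rw [cnt, h, card_image_of_injective _ hI.injective]

lemma cnt_split (hI : StrictMono I) {v w : ℕ} (hvw : v ≤ w) :
    cnt I w = cnt I v + (Av I ∩ Finset.Ioc v w).card := by
  rw [cnt_eq_card hI, cnt_eq_card hI]
  have h : Av I ∩ Finset.Iic w = (Av I ∩ Finset.Iic v) ∪ (Av I ∩ Finset.Ioc v w) := by
    ext z
    simp only [mem_inter, Finset.mem_Iic, mem_union, Finset.mem_Ioc]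
    constructor
    · rintro ⟨h1, h2⟩
      rcases le_or_gt z v with h3 | h3
      · exact Or.inl ⟨h1, h3⟩
      · exact Or.inr ⟨h1, h3, h2⟩
    · rintro (⟨h1, h2⟩ | ⟨h1, h2, h3⟩)
      · exact ⟨h1, le_trans h2 hvw⟩
      · exact ⟨h1, h3⟩
  have hdisj : Disjoint (Av I ∩ Finset.Iic v) (Av I ∩ Finset.Ioc v w) := by
    rw [disjoint_left]
    rintro z hz1 hz2
    rw [mem_inter, Finset.mem_Iic] at hz1
    rw [mem_inter, Finset.mem_Ioc] at hz2
    omega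
  rw [h, card_union_of_disjoint hdisj]


lemma C1 (hI : StrictMono I) (hJ : StrictMono J) {a b : Fin k} (hab : a < b)
    (heq : ∀ l, a < l → l < b → I l = J l)
    (h1 : I a < J a) (h2 : J a < I b) (h3 : I b < J b) : P I J := by
  have hIbX : I b ∈ Xs I J := by
    rw [Xs, mem_sdiff]
    refine ⟨mem_Av.mpr ⟨b, rfl⟩, ?_⟩
    rw [mem_Av]
    rintro ⟨c, hc⟩
    have hca : a < c := hJ.lt_iff_lt.mp (by rw [hc]; exact h2)
    have hcb : c < b := hJ.lt_iff_lt.mp (by rw [hc]; exact h3)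
    have hIc : I c = I b := (heq c hca hcb).trans hc
    exact absurd (hI.injective hIc) (ne_of_lt hcb)
  have hcntJb : cnt J (I b) = b.val := by
    have h : (univ.filter fun l => J l ≤ I b) = Finset.Iio b := by
      ext l
      simp only [mem_filter, mem_univ, true_and, Finset.mem_Iio]
      constructor
      · intro hl
        by_contra hlb
        push_neg at hlb
        exact absurd (le_trans (hJ.monotone hlb) hl) (not_le.mpr h3)
      · intro hl
        rcases le_or_gt l a with h' | h'
        · exact le_of_lt (lt_of_le_of_lt (hJ.monotone h') h2)
        · rw [← heq l h' hl]; exact hI.monotone (le_of_lt hl)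
    rw [cnt, h, Fin.card_Iio]
  have hcntIb : cnt I (I b) = b.val + 1 := cnt_apply hI b
  have hfd_b : fd I J (I b) = 1 := by rw [fd, hcntJb, hcntIb]; push_cast; ring
  have hcntJa : cnt J (I a) ≤ a.val := by
    have hsub : (univ.filter fun l => J l ≤ I a) ⊆ Finset.Iio a := by
      intro l hl
      simp only [mem_filter, mem_univ, true_and] at hl
      have : J l < J a := lt_of_le_of_lt hl h1
      simpa using hJ.lt_iff_lt.mp this
    have := card_le_card hsub
    rw [Fin.card_Iio] at this
    rw [cnt]
    omega
  have hcntIa : cnt I (I a) = a.val + 1 := cnt_apply hI a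
  have hCand : ∃ v ∈ Xs I J, v ≤ I a := by
    by_contra hc
    push_neg at hc
    have hsub : Av I ∩ Finset.Iic (I a) ⊆ Av J ∩ Finset.Iic (I a) := by
      intro v hv
      rw [mem_inter, Finset.mem_Iic] at hv
      rw [mem_inter, Finset.mem_Iic]
      refine ⟨?_, hv.2⟩
      by_contra hvB
      have hvX : v ∈ Xs I J := by rw [Xs, mem_sdiff]; exact ⟨hv.1, hvB⟩
      exact absurd hv.2 (not_le.mpr (hc v hvX))
    have hcc := card_le_card hsub
    rw [← cnt_eq_card hI, ← cnt_eq_card hJ] at hcc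
    omega
  obtain ⟨v0, hv0X, hv0le⟩ := hCand
  have hCne : ((Xs I J).filter (fun z => z < I b)).Nonempty :=
    ⟨v0, mem_filter.mpr ⟨hv0X, lt_of_le_of_lt hv0le (hI hab)⟩⟩
  obtain ⟨x, hxC, hxmax⟩ : ∃ x ∈ (Xs I J).filter (fun z => z < I b),
      ∀ z ∈ (Xs I J).filter (fun z => z < I b), z ≤ x :=
    ⟨_, max'_mem _ hCne, fun z hz => le_max' _ z hz⟩
  have hxX : x ∈ Xs I J := (mem_filter.mp hxC).1
  have hxlt : x < I b := (mem_filter.mp hxC).2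
  have hconsec : ∀ z ∈ Xs I J, ¬ (x < z ∧ z < I b) := by
    rintro z hz ⟨h4, h5⟩
    exact absurd (hxmax z (mem_filter.mpr ⟨hz, h5⟩)) (not_le.mpr h4)
  have hxJa : x < J a := by
    rcases lt_or_ge x (J a) with h | h
    · exact h
    · exfalso
      obtain ⟨hxA, hxB⟩ := mem_sdiff.mp hxX
      obtain ⟨c, hcx⟩ := mem_Av.mp hxA
      have hac : a < c := hI.lt_iff_lt.mp (by rw [hcx]; exact lt_of_lt_of_le h1 h)
      have hcb : c < b := hI.lt_iff_lt.mp (by rw [hcx]; exact hxlt)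
      exact hxB (mem_Av.mpr ⟨c, (heq c hac hcb).symm.trans hcx⟩)
  have hfd_x : 1 ≤ fd I J x := by
    rcases le_or_gt (I a) x with h | h
    · have h5 : a.val < cnt I x := cnt_ge hI h
      have h6 : cnt J x ≤ a.val := by
        have hsub : (univ.filter fun l => J l ≤ x) ⊆ Finset.Iio a := by
          intro l hl
          simp only [mem_filter, mem_univ, true_and] at hl
          have : J l < J a := lt_of_le_of_lt hl hxJa
          simpa using hJ.lt_iff_lt.mp this
        have := card_le_card hsub
        rw [Fin.card_Iio] at this
        rw [cnt]
        omega
      rw [fd]; push_cast; omega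
    · have hsub : Av I ∩ Finset.Ioc x (I a) ⊆ Av J ∩ Finset.Ioc x (I a) := by
        intro v hv
        rw [mem_inter, Finset.mem_Ioc] at hv
        rw [mem_inter, Finset.mem_Ioc]
        refine ⟨?_, hv.2⟩
        by_contra hvB
        have hvX : v ∈ Xs I J := by rw [Xs, mem_sdiff]; exact ⟨hv.1, hvB⟩
        exact hconsec v hvX ⟨hv.2.1, lt_of_le_of_lt hv.2.2 (hI hab)⟩
      have hcc := card_le_card hsub
      have hsI := cnt_split hI (le_of_lt h)
      have hsJ := cnt_split hJ (le_of_lt h)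
      rw [fd]
      push_cast
      omega
  exact ⟨x, hxX, I b, hIbX, hxlt, hconsec, hfd_x, hfd_b⟩


lemma C2 (hI : StrictMono I) (hJ : StrictMono J) (hP : P I J) :
    ∃ a b : Fin k, a < b ∧ (∀ l, a < l → l < b → I l = J l) ∧
      I a < J a ∧ J a < I b ∧ I b < J b := by
  obtain ⟨x, hxX, x', hx'X, hxx', hconsec, hfdx, hfdx'⟩ := hP
  obtain ⟨hx'A, hx'B⟩ := mem_sdiff.mp hx'X
  obtain ⟨b, rfl⟩ := mem_Av.mp hx'A
  have hcJ : cnt J (I b) = b.val := by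
    rw [fd, cnt_apply hI b] at hfdx'
    omega
  have hJb : I b < J b := by
    by_contra h
    push_neg at h
    have := cnt_ge hJ h
    omega
  have hTne : ∃ l : Fin k, l < b ∧ I l ≠ J l := by
    by_contra h
    push_neg at h
    obtain ⟨hxA, hxB⟩ := mem_sdiff.mp hxX
    obtain ⟨c, rfl⟩ := mem_Av.mp hxA
    have hcb : c < b := hI.lt_iff_lt.mp hxx'
    exact hxB (mem_Av.mpr ⟨c, (h c hcb).symm⟩)
  obtain ⟨l0, hl0⟩ := hTne
  have hTne' : (univ.filter (fun l : Fin k => l < b ∧ I l ≠ J l)).Nonempty :=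
    ⟨l0, mem_filter.mpr ⟨mem_univ _, hl0⟩⟩
  obtain ⟨a, haT, hamax⟩ : ∃ a ∈ univ.filter (fun l : Fin k => l < b ∧ I l ≠ J l),
      ∀ z ∈ univ.filter (fun l : Fin k => l < b ∧ I l ≠ J l), z ≤ a :=
    ⟨_, max'_mem _ hTne', fun z hz => le_max' _ z hz⟩
  obtain ⟨hab, hne⟩ : a < b ∧ I a ≠ J a := (mem_filter.mp haT).2
  have heq : ∀ l, a < l → l < b → I l = J l := by
    intro l h4 h5
    by_contra h6
    exact absurd (hamax l (mem_filter.mpr ⟨mem_univ _, h5, h6⟩)) (not_le.mpr h4)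
  have hIa : I a < J a := by
    rcases hne.lt_or_gt with h | h
    · exact h
    · exfalso
      have hIaX : I a ∈ Xs I J := by
        rw [Xs, mem_sdiff]
        refine ⟨mem_Av.mpr ⟨a, rfl⟩, ?_⟩
        rw [mem_Av]
        rintro ⟨c, hc⟩
        have hac : a < c := hJ.lt_iff_lt.mp (by rw [hc]; exact h)
        have hcb : c < b := by
          have h7 : J c ≤ I b := by rw [hc]; exact le_of_lt (hI hab)
          have := cnt_ge hJ h7
          rw [hcJ] at this
          exact this
        have : I c = I a := (heq c hac hcb).trans hc
        exact absurd (hI.injective this) (ne_of_gt hac)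
      have hIax : I a ≤ x := by
        by_contra h7
        push_neg at h7
        exact hconsec (I a) hIaX ⟨h7, hI hab⟩
      have hfeq : (univ.filter fun l => I l ≤ x) = (univ.filter fun l => J l ≤ x) := by
        ext l
        simp only [mem_filter, mem_univ, true_and]
        constructor
        · intro hl
          rcases le_or_gt l a with h' | h'
          · exact le_trans (le_of_lt (lt_of_le_of_lt (hJ.monotone h') h)) hIax
          · have hlb : l < b := hI.lt_iff_lt.mp (lt_of_le_of_lt hl hxx')
            rw [← heq l h' hlb]
            exact hl
        · intro hl
          rcases le_or_gt l a with h' | h'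
          · exact le_trans (hI.monotone h') hIax
          · have hlb : l < b := hJ.lt_iff_lt.mp (lt_of_le_of_lt hl (lt_trans hxx' hJb))
            rw [heq l h' hlb]
            exact hl
      rw [fd, cnt, cnt, hfeq] at hfdx
      omega
  have hJaIb : J a < I b := by
    have h8 : J a ≤ I b := le_of_cnt hJ (by rw [hcJ]; exact hab)
    rcases lt_or_eq_of_le h8 with h9 | h9
    · exact h9
    · exact absurd (mem_Av.mpr ⟨a, h9⟩) hx'B
  exact ⟨a, b, hab, heq, hIa, hJaIb, hJb⟩


lemma notNC_iff (hI : StrictMono I) (hJ : StrictMono J) :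
    ¬ NonCrossing I J ↔ P I J ∨ P J I := by
  constructor
  · intro h
    unfold NonCrossing at h
    push_neg at h
    obtain ⟨a, b, hab, heq, hcross⟩ := h
    rcases hcross with ⟨h1, h2, h3⟩ | ⟨h1, h2, h3⟩
    · exact Or.inl (C1 hI hJ hab heq h1 h2 h3)
    · exact Or.inr (C1 hJ hI hab (fun l h4 h5 => (heq l h4 h5).symm) h1 h2 h3)
  · rintro (hP | hP) hNC
    · obtain ⟨a, b, hab, heq, h1, h2, h3⟩ := C2 hI hJ hP
      exact hNC a b hab heq (Or.inl ⟨h1, h2, h3⟩)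
    · obtain ⟨a, b, hab, heq, h1, h2, h3⟩ := C2 hJ hI hP
      exact hNC a b hab (fun l h4 h5 => (heq l h4 h5).symm) (Or.inr ⟨h1, h2, h3⟩)

lemma fd_eq_sym (hI : StrictMono I) (hJ : StrictMono J) (v : ℕ) :
    fd I J v = ((Xs I J ∩ Finset.Iic v).card : ℤ) - ((Xs J I ∩ Finset.Iic v).card : ℤ) := by
  have e1 : (Av I ∩ Finset.Iic v) \ Av J = Xs I J ∩ Finset.Iic v := by
    ext z
    simp only [mem_sdiff, mem_inter, Finset.mem_Iic, Xs]
    tauto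
  have e2 : (Av I ∩ Finset.Iic v) ∩ Av J = (Av I ∩ Av J) ∩ Finset.Iic v := by
    ext z
    simp only [mem_inter, Finset.mem_Iic]
    tauto
  have e3 : (Av J ∩ Finset.Iic v) \ Av I = Xs J I ∩ Finset.Iic v := by
    ext z
    simp only [mem_sdiff, mem_inter, Finset.mem_Iic, Xs]
    tauto
  have e4 : (Av J ∩ Finset.Iic v) ∩ Av I = (Av I ∩ Av J) ∩ Finset.Iic v := by
    ext z
    simp only [mem_inter, Finset.mem_Iic]
    tauto
  have h1 := card_sdiff_add_card_inter (Av I ∩ Finset.Iic v) (Av J)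
  have h2 := card_sdiff_add_card_inter (Av J ∩ Finset.Iic v) (Av I)
  rw [e1, e2] at h1
  rw [e3, e4] at h2
  rw [fd, cnt_eq_card hI, cnt_eq_card hJ]
  omega


lemma P_transfer {m : ℕ} {I J : Fin k → ℕ} {I' J' : Fin m → ℕ} {σ : ℕ → ℕ}
    (hI : StrictMono I) (hJ : StrictMono J) (hI' : StrictMono I') (hJ' : StrictMono J')
    (hmono : ∀ x y, (x ∈ Xs I J ∨ x ∈ Xs J I) → (y ∈ Xs I J ∨ y ∈ Xs J I) → x < y → σ x < σ y)
    (hA' : Av I' = (Xs I J).image σ)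
    (hB' : Av J' = (Xs J I).image σ) :
    P I J ↔ P I' J' := by
  -- order-reflecting
  have hlt : ∀ x y, (x ∈ Xs I J ∨ x ∈ Xs J I) → (y ∈ Xs I J ∨ y ∈ Xs J I) →
      (x < y ↔ σ x < σ y) := by
    intro x y hx hy
    constructor
    · exact hmono x y hx hy
    · intro h
      rcases lt_trichotomy x y with h' | h' | h'
      · exact h'
      · subst h'; omega
      · exact absurd (hmono y x hy hx h') (by omega)
  have hdisjim : ∀ z, z ∈ (Xs I J).image σ → z ∈ (Xs J I).image σ → False := by
    intro z hz1 hz2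
    obtain ⟨x, hx, rfl⟩ := mem_image.mp hz1
    obtain ⟨y, hy, hxy⟩ := mem_image.mp hz2
    have hne : y ≠ x := by
      rintro rfl
      rw [Xs, mem_sdiff] at hx hy
      exact hy.2 hx.1
    rcases hne.lt_or_gt with h | h
    · exact absurd hxy (by have := hmono y x (Or.inr hy) (Or.inl hx) h; omega)
    · exact absurd hxy (by have := hmono x y (Or.inl hx) (Or.inr hy) h; omega)
  have hXs' : Xs I' J' = (Xs I J).image σ := by
    rw [Xs, hA', hB']
    ext z
    rw [mem_sdiff]
    constructor
    · rintro ⟨h1, _⟩; exact h1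
    · intro h1; exact ⟨h1, fun h2 => hdisjim z h1 h2⟩
  have hXs'' : Xs J' I' = (Xs J I).image σ := by
    rw [Xs, hA', hB']
    ext z
    rw [mem_sdiff]
    constructor
    · rintro ⟨h1, _⟩; exact h1
    · intro h1; exact ⟨h1, fun h2 => hdisjim z h2 h1⟩
  have hinj : ∀ w s, (w ∈ Xs I J ∨ w ∈ Xs J I) → (s ∈ Xs I J ∨ s ∈ Xs J I) →
      σ w = σ s → w = s := by
    intro w s hw hs h
    by_contra hne
    rcases Ne.lt_or_gt hne with h' | h'
    · exact absurd h (ne_of_lt (hmono w s hw hs h'))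
    · exact absurd h.symm (ne_of_lt (hmono s w hs hw h'))
  -- card transfer
  have hcard : ∀ (W : Finset ℕ), (∀ w ∈ W, w ∈ Xs I J ∨ w ∈ Xs J I) →
      ∀ s, (s ∈ Xs I J ∨ s ∈ Xs J I) →
      (W ∩ Finset.Iic s).card = (W.image σ ∩ Finset.Iic (σ s)).card := by
    intro W hW s hs
    have him : (W ∩ Finset.Iic s).image σ = W.image σ ∩ Finset.Iic (σ s) := by
      ext z
      simp only [mem_image, mem_inter, Finset.mem_Iic]
      constructor
      · rintro ⟨w, ⟨hw1, hw2⟩, rfl⟩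
        refine ⟨⟨w, hw1, rfl⟩, ?_⟩
        rcases eq_or_lt_of_le hw2 with h | h
        · subst h; exact le_rfl
        · exact le_of_lt (hmono w s (hW w hw1) hs h)
      · rintro ⟨⟨w, hw1, rfl⟩, h2⟩
        refine ⟨w, ⟨hw1, ?_⟩, rfl⟩
        rcases eq_or_lt_of_le h2 with h | h
        · exact le_of_eq (hinj w s (hW w hw1) hs h)
        · exact le_of_lt ((hlt w s (hW w hw1) hs).mpr h)
    rw [← him]
    rw [card_image_of_injOn]
    intro x hx y hy hxy
    have hx' := hW x (mem_inter.mp hx).1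
    have hy' := hW y (mem_inter.mp hy).1
    by_contra hne
    rcases Ne.lt_or_gt hne with h | h
    · exact absurd hxy (ne_of_lt (hmono x y hx' hy' h))
    · exact absurd hxy.symm (ne_of_lt (hmono y x hy' hx' h))
  have hfd' : ∀ s, (s ∈ Xs I J ∨ s ∈ Xs J I) → fd I' J' (σ s) = fd I J s := by
    intro s hs
    rw [fd_eq_sym hI hJ, fd_eq_sym hI' hJ', hXs', hXs'',
      ← hcard (Xs I J) (fun w hw => Or.inl hw) s hs,
      ← hcard (Xs J I) (fun w hw => Or.inr hw) s hs]
  constructor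
  · rintro ⟨x, hxX, x', hx'X, hlt', hcons, hf1, hf2⟩
    refine ⟨σ x, by rw [hXs']; exact mem_image_of_mem σ hxX,
           σ x', by rw [hXs']; exact mem_image_of_mem σ hx'X,
           hmono x x' (Or.inl hxX) (Or.inl hx'X) hlt', ?_, ?_, ?_⟩
    · intro z hz hzb
      rw [hXs'] at hz
      obtain ⟨w, hw, rfl⟩ := mem_image.mp hz
      exact hcons w hw ⟨(hlt x w (Or.inl hxX) (Or.inl hw)).mpr hzb.1,
        (hlt w x' (Or.inl hw) (Or.inl hx'X)).mpr hzb.2⟩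
    · rw [hfd' x (Or.inl hxX)]; exact hf1
    · rw [hfd' x' (Or.inl hx'X)]; exact hf2
  · rintro ⟨u, huX, u', hu'X, hlt', hcons, hf1, hf2⟩
    rw [hXs'] at huX hu'X
    obtain ⟨x, hxX, rfl⟩ := mem_image.mp huX
    obtain ⟨x', hx'X, rfl⟩ := mem_image.mp hu'X
    refine ⟨x, hxX, x', hx'X,
      (hlt x x' (Or.inl hxX) (Or.inl hx'X)).mpr hlt', ?_, ?_, ?_⟩
    · intro z hz hzb
      exact hcons (σ z) (by rw [hXs']; exact mem_image_of_mem σ hz)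
        ⟨hmono x z (Or.inl hxX) (Or.inl hz) hzb.1,
         hmono z x' (Or.inl hz) (Or.inl hx'X) hzb.2⟩
    · rw [← hfd' x (Or.inl hxX)]; exact hf1
    · rw [← hfd' x' (Or.inl hx'X)]; exact hf2


end NCAux

open Finset NCAux in
/-- whether `I` and `J` are noncrossing depends only on their restriction
to the symmetric difference.  Here `σ` is the unique order-preserving bijection from
the symmetric difference `S = (I ∪ J) \ (I ∩ J)` onto `{1,…,2m}` where `m = |I \ J|`,
and `I'`, `J'` are the elements of `V_{m,2m}` enumerating `σ(I \ J)` and `σ(J \ I)`. -/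
theorem stmt3 {n k : ℕ} (hk : 0 < k) (hkn : k < n)
    (I J : Fin k → ℕ) (hI : IsVkn n I) (hJ : IsVkn n J)
    (m : ℕ) (σ : ℕ → ℕ)
    (hσmono : ∀ x y : ℕ,
      ((MemT I x ∧ ¬ MemT J x) ∨ (MemT J x ∧ ¬ MemT I x)) →
      ((MemT I y ∧ ¬ MemT J y) ∨ (MemT J y ∧ ¬ MemT I y)) →
      x < y → σ x < σ y)
    (hσmaps : ∀ x : ℕ,
      ((MemT I x ∧ ¬ MemT J x) ∨ (MemT J x ∧ ¬ MemT I x)) →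
      1 ≤ σ x ∧ σ x ≤ 2 * m)
    (hσsurj : ∀ y : ℕ, 1 ≤ y → y ≤ 2 * m →
      ∃ x, ((MemT I x ∧ ¬ MemT J x) ∨ (MemT J x ∧ ¬ MemT I x)) ∧ σ x = y)
    (I' J' : Fin m → ℕ) (hI' : IsVkn (2 * m) I') (hJ' : IsVkn (2 * m) J')
    (hI'range : ∀ y, MemT I' y ↔ ∃ x, (MemT I x ∧ ¬ MemT J x) ∧ σ x = y)
    (hJ'range : ∀ y, MemT J' y ↔ ∃ x, (MemT J x ∧ ¬ MemT I x) ∧ σ x = y) :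
    NonCrossing I J ↔ NonCrossing I' J' := by
  have hXmemI : ∀ x, x ∈ Xs I J ↔ (MemT I x ∧ ¬ MemT J x) := by
    intro x
    rw [Xs, mem_sdiff, mem_Av, mem_Av]
    exact Iff.rfl
  have hXmemJ : ∀ x, x ∈ Xs J I ↔ (MemT J x ∧ ¬ MemT I x) := by
    intro x
    rw [Xs, mem_sdiff, mem_Av, mem_Av]
    exact Iff.rfl
  have hcond : ∀ x, ((MemT I x ∧ ¬ MemT J x) ∨ (MemT J x ∧ ¬ MemT I x)) ↔
      (x ∈ Xs I J ∨ x ∈ Xs J I) := by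
    intro x
    rw [hXmemI, hXmemJ]
  have hmono' : ∀ x y, (x ∈ Xs I J ∨ x ∈ Xs J I) →
      (y ∈ Xs I J ∨ y ∈ Xs J I) → x < y → σ x < σ y :=
    fun x y hx hy => hσmono x y ((hcond x).mpr hx) ((hcond y).mpr hy)
  have hmono'' : ∀ x y, (x ∈ Xs J I ∨ x ∈ Xs I J) →
      (y ∈ Xs J I ∨ y ∈ Xs I J) → x < y → σ x < σ y :=
    fun x y hx hy => hmono' x y hx.symm hy.symm
  have hA' : Av I' = (Xs I J).image σ := by
    ext y
    rw [mem_Av]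
    rw [show (∃ a, I' a = y) ↔ MemT I' y from Iff.rfl, hI'range y]
    simp only [mem_image]
    constructor
    · rintro ⟨x, hx, rfl⟩
      exact ⟨x, (hXmemI x).mpr hx, rfl⟩
    · rintro ⟨x, hx, rfl⟩
      exact ⟨x, (hXmemI x).mp hx, rfl⟩
  have hB' : Av J' = (Xs J I).image σ := by
    ext y
    rw [mem_Av]
    rw [show (∃ a, J' a = y) ↔ MemT J' y from Iff.rfl, hJ'range y]
    simp only [mem_image]
    constructor
    · rintro ⟨x, hx, rfl⟩
      exact ⟨x, (hXmemJ x).mpr hx, rfl⟩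
    · rintro ⟨x, hx, rfl⟩
      exact ⟨x, (hXmemJ x).mp hx, rfl⟩
  have h1 : ¬ NonCrossing I J ↔ ¬ NonCrossing I' J' := by
    rw [notNC_iff hI.1 hJ.1, notNC_iff hI'.1 hJ'.1]
    exact or_congr (P_transfer hI.1 hJ.1 hI'.1 hJ'.1 hmono' hA' hB')
      (P_transfer hJ.1 hI.1 hJ'.1 hI'.1 hmono'' hB' hA')
  exact not_iff_not.mp h1
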